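/- arXiv:0911.2077 — 9 statements merged into one kernel-verified Lean document; each statement's English description precedes it below -/
import Mathlib

section
/- For odd n, P[B(p,n+2) ≥ (n+2)/2] − P[B(p,n) ≥ n/2] = (p − 1/2) · C(n+1, (n+1)/2) · (p(1−p))^{(n+1)/2}. -/
/-! Conditioning on the outcomes of the two extra trials gives
`P[B(p,n+2) ≥ k+2] = p² P[B(p,n) ≥ k] + 2p(1-p) P[B(p,n) ≥ k+1] + (1-p)² P[B(p,n) ≥ k+2]`.
For `n = 2m+1` and `k = m`, the majority event of the `n+2` trials then differs from that of the
first `n` trials only through the two central outcomes `m` and `m+1` of the first `n` trials,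
which have the same binomial coefficient. -/

open Real

noncomputable def binomTail (n k : ℕ) (p : ℝ) : ℝ :=
  ∑ h ∈ Finset.Icc k n, (n.choose h : ℝ) * p ^ h * (1 - p) ^ (n - h)

section BinomTail

variable (p : ℝ)

theorem binomTail_succ_succ_eq_sum (N k : ℕ) :
    binomTail (N + 1) (k + 1) p
      = ∑ h ∈ Finset.Icc k N, ((N + 1).choose (h + 1) : ℝ) * p ^ (h + 1) * (1 - p) ^ (N - h) := by
  rw [binomTail, ← Finset.map_add_right_Icc, Finset.sum_map]
  simp only [addRightEmbedding_apply, Nat.add_sub_add_right]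

theorem binomTail_succ_eq_sum (N k : ℕ) :
    binomTail N (k + 1) p
      = ∑ h ∈ Finset.Icc k N, (N.choose (h + 1) : ℝ) * p ^ (h + 1) * (1 - p) ^ (N - (h + 1)) := by
  -- the extra index `N + 1` contributes `N.choose (N + 1) = 0`
  have extend : binomTail N (k + 1) p = ∑ h ∈ Finset.Icc (k + 1) (N + 1),
      (N.choose h : ℝ) * p ^ h * (1 - p) ^ (N - h) := by
    refine Finset.sum_subset (Finset.Icc_subset_Icc_right N.le_succ) fun h hh hN => ?_
    obtain rfl : h = N + 1 := by simp only [Finset.mem_Icc] at hh hN; omega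
    simp
  rw [extend, ← Finset.map_add_right_Icc, Finset.sum_map]
  rfl

theorem one_sub_mul_choose_mul_pow (N h : ℕ) :
    (1 - p) * ((N.choose (h + 1) : ℝ) * p ^ (h + 1) * (1 - p) ^ (N - (h + 1)))
      = (N.choose (h + 1) : ℝ) * p ^ (h + 1) * (1 - p) ^ (N - h) := by
  rcases lt_or_ge h N with hN | hN
  · rw [show N - h = N - (h + 1) + 1 by omega, pow_succ]
    ring
  · simp [Nat.choose_eq_zero_of_lt (Nat.lt_succ_of_le hN)]

theorem binomTail_succ_succ (N k : ℕ) :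
    binomTail (N + 1) (k + 1) p = p * binomTail N k p + (1 - p) * binomTail N (k + 1) p := by
  rw [binomTail_succ_succ_eq_sum, binomTail_succ_eq_sum, binomTail, Finset.mul_sum,
    Finset.mul_sum, ← Finset.sum_add_distrib]
  refine Finset.sum_congr rfl fun h _ => ?_
  rw [one_sub_mul_choose_mul_pow, Nat.choose_succ_succ', Nat.cast_add]
  ring

theorem binomTail_add_two (N k : ℕ) :
    binomTail (N + 2) (k + 2) p
      = p ^ 2 * binomTail N k p + 2 * p * (1 - p) * binomTail N (k + 1) p
        + (1 - p) ^ 2 * binomTail N (k + 2) p := by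
  rw [binomTail_succ_succ, binomTail_succ_succ, binomTail_succ_succ]
  ring

theorem binomTail_eq_add_succ {N k : ℕ} (hk : k ≤ N) :
    binomTail N k p = (N.choose k : ℝ) * p ^ k * (1 - p) ^ (N - k) + binomTail N (k + 1) p := by
  rw [binomTail, binomTail, Finset.Icc_eq_cons_Ioc hk, Finset.sum_cons,
    ← Finset.Icc_add_one_left_eq_Ioc]

end BinomTail

theorem stmt0_general (n : ℕ) (hn : Odd n) (p : ℝ) :
    binomTail (n + 2) ((n + 3) / 2) p - binomTail n ((n + 1) / 2) p
      = (p - 1 / 2) * ((n + 1).choose ((n + 1) / 2) : ℝ) * (p * (1 - p)) ^ ((n + 1) / 2) := by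
  obtain ⟨m, rfl⟩ := hn
  rw [show (2 * m + 1 + 3) / 2 = m + 2 by omega, show (2 * m + 1 + 1) / 2 = m + 1 by omega,
    binomTail_add_two]
  have below := binomTail_eq_add_succ p (show m ≤ 2 * m + 1 by omega)
  have above := binomTail_eq_add_succ p (show m + 1 ≤ 2 * m + 1 by omega)
  rw [show 2 * m + 1 - m = m + 1 by omega] at below
  rw [show 2 * m + 1 - (m + 1) = m by omega, Nat.choose_symm_half] at above
  rw [Nat.choose_succ_succ', Nat.choose_symm_half, Nat.cast_add, mul_pow]
  linear_combination p ^ 2 * below - (1 - p) ^ 2 * above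

theorem stmt0 (n : ℕ) (hn : Odd n) (p : ℝ) (hp0 : 0 ≤ p) (hp1 : p ≤ 1) :
    binomTail (n + 2) ((n + 3) / 2) p - binomTail n ((n + 1) / 2) p
      = (p - 1 / 2) * ((n + 1).choose ((n + 1) / 2) : ℝ) * (p * (1 - p)) ^ ((n + 1) / 2) :=
  stmt0_general n hn p
end

section
/- For odd n and 0 ≤ p < 1/2, P[B(p,n) ≥ n/2] = (1/2 − p) · Σ_{j ≥ (n+1)/2} C(2j,j) (p(1−p))^j, where the series converges. -/
/-!
Write `G s` for the probability `binomTail (2 * s + 1) (s + 1) p` that a majority of `2 * s + 1`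
trials succeed. Conditioning on the two extra trials gives
`G s - G (s + 1) = (1 / 2 - p) * centralBinom (s + 1) * (p * (1 - p)) ^ (s + 1)`,
and for `p < 1 / 2` every majority outcome has probability at most `p ^ (s + 1) * (1 - p) ^ s`,
so `G s ≤ 2 * p * (4 * p * (1 - p)) ^ s → 0`. The series therefore telescopes to `G t`, where `n = 2 * t + 1`.
-/

open Real

open Filter Topology Finset

lemma hasSum_sub_succ_of_antitone {f : ℕ → ℝ} {l : ℝ} (hf : Antitone f)
    (hl : Tendsto f atTop (𝓝 l)) : HasSum (fun n ↦ f n - f (n + 1)) (f 0 - l) := by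
  rw [hasSum_iff_tendsto_nat_of_nonneg fun n ↦ sub_nonneg.2 (hf n.le_succ)]
  simpa only [sum_range_sub'] using tendsto_const_nhds.sub hl

lemma Nat.centralBinom_succ_eq_two_mul_choose (s : ℕ) :
    (s + 1).centralBinom = 2 * (2 * s + 1).choose (s + 1) := by
  rw [Nat.centralBinom_eq_two_mul_choose, show 2 * (s + 1) = 2 * s + 1 + 1 by ring,
    Nat.choose_succ_succ', ← Nat.choose_symm_half, ← two_mul]

lemma pow_mul_pow_sub_le_of_le {p q : ℝ} (hp : 0 ≤ p) (hpq : p ≤ q) {k h n : ℕ} (hkh : k ≤ h)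
    (hhn : h ≤ n) : p ^ h * q ^ (n - h) ≤ p ^ k * q ^ (n - k) := by
  obtain ⟨d, rfl⟩ := Nat.exists_eq_add_of_le hkh
  calc p ^ (k + d) * q ^ (n - (k + d)) = p ^ k * p ^ d * q ^ (n - (k + d)) := by rw [pow_add]
    _ ≤ p ^ k * q ^ d * q ^ (n - (k + d)) :=
        mul_le_mul_of_nonneg_right (by gcongr) (pow_nonneg (hp.trans hpq) _)
    _ = p ^ k * q ^ (n - k) := by rw [mul_assoc, ← pow_add]; congr 2; omega

lemma binomTail_eq_add_binomTail_succ (n k : ℕ) (p : ℝ) :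
    binomTail n k p = n.choose k * p ^ k * (1 - p) ^ (n - k) + binomTail n (k + 1) p := by
  rcases le_or_gt k n with hkn | hnk
  · rw [binomTail, binomTail, ← insert_Icc_add_one_left_eq_Icc hkn, sum_insert (by simp)]
  · simp [binomTail, Nat.choose_eq_zero_of_lt hnk, Finset.Icc_eq_empty_of_lt, hnk,
      hnk.trans (Nat.lt_succ_self k)]

lemma binomTail_add_succ (p : ℝ) (k d : ℕ) :
    binomTail (k + d + 1) (k + 1) p
      = binomTail (k + d) (k + 1) p + (k + d).choose k * p ^ (k + 1) * (1 - p) ^ d := by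
  induction d generalizing k with
  | zero => simp [binomTail]
  | succ d ih =>
    have hpascal : ((k + d + 2).choose (k + 1) : ℝ)
        = (k + d + 1).choose k + (k + d + 1).choose (k + 1) := by
      exact_mod_cast Nat.choose_succ_succ' (k + d + 1) k
    have htop := binomTail_eq_add_binomTail_succ (k + d + 2) (k + 1) p
    have hbot := binomTail_eq_add_binomTail_succ (k + d + 1) (k + 1) p
    have hih := ih (k + 1)
    rw [show k + d + 2 - (k + 1) = d + 1 by omega] at htop
    rw [show k + d + 1 - (k + 1) = d by omega] at hbot
    rw [show k + 1 + d = k + d + 1 by omega] at hih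
    rw [show k + (d + 1) + 1 = k + d + 2 by omega, show k + (d + 1) = k + d + 1 by omega,
      htop, hih, hbot]
    linear_combination p ^ (k + 1) * (1 - p) ^ (d + 1) * hpascal

lemma binomTail_odd_sub_succ (p : ℝ) (s : ℕ) :
    binomTail (2 * s + 1) (s + 1) p - binomTail (2 * (s + 1) + 1) (s + 1 + 1) p
      = (1 / 2 - p) * ((s + 1).centralBinom * (p * (1 - p)) ^ (s + 1)) := by
  have hsplit := binomTail_eq_add_binomTail_succ (2 * s + 1) (s + 1) p
  have hlast := binomTail_add_succ p (s + 1) (s + 1)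
  have hfirst := binomTail_add_succ p (s + 1) s
  rw [show 2 * s + 1 - (s + 1) = s by omega] at hsplit
  rw [show s + 1 + (s + 1) = 2 * (s + 1) by ring, ← Nat.centralBinom_eq_two_mul_choose] at hlast
  rw [show s + 1 + s + 1 = 2 * (s + 1) by ring, show s + 1 + s = 2 * s + 1 by ring] at hfirst
  rw [hsplit, hlast, hfirst, Nat.centralBinom_succ_eq_two_mul_choose, mul_pow]
  push_cast
  ring

section

variable {p : ℝ}

lemma binomTail_nonneg (n k : ℕ) (hp0 : 0 ≤ p) (hp1 : p ≤ 1) : 0 ≤ binomTail n k p := by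
  have : 0 ≤ 1 - p := sub_nonneg.2 hp1
  unfold binomTail
  positivity

lemma binomTail_le (n k : ℕ) (hp0 : 0 ≤ p) (hp : p ≤ 1 - p) :
    binomTail n k p ≤ 2 ^ n * p ^ k * (1 - p) ^ (n - k) := by
  have hq : 0 ≤ 1 - p := hp0.trans hp
  calc binomTail n k p ≤ ∑ h ∈ Icc k n, (n.choose h : ℝ) * (p ^ k * (1 - p) ^ (n - k)) := by
        refine sum_le_sum fun h hh ↦ ?_
        rw [mul_assoc]
        exact mul_le_mul_of_nonneg_left
          (pow_mul_pow_sub_le_of_le hp0 hp (mem_Icc.1 hh).1 (mem_Icc.1 hh).2) (Nat.cast_nonneg _)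
    _ ≤ ∑ h ∈ range (n + 1), (n.choose h : ℝ) * (p ^ k * (1 - p) ^ (n - k)) :=
        sum_le_sum_of_subset_of_nonneg (fun h hh ↦ mem_range.2 (by simp at hh; omega))
          fun _ _ _ ↦ by positivity
    _ = 2 ^ n * p ^ k * (1 - p) ^ (n - k) := by
        rw [← sum_mul, ← Nat.cast_sum, Nat.sum_range_choose]; push_cast; ring

lemma tendsto_binomTail_odd_zero (hp0 : 0 ≤ p) (hp : p < 1 / 2) :
    Tendsto (fun s ↦ binomTail (2 * s + 1) (s + 1) p) atTop (𝓝 0) := by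
  have hx : 4 * (p * (1 - p)) < 1 := by nlinarith
  have hbound : Tendsto (fun s : ℕ ↦ 2 * p * (4 * (p * (1 - p))) ^ s) atTop (𝓝 0) := by
    simpa using (tendsto_pow_atTop_nhds_zero_of_lt_one (by nlinarith) hx).const_mul (2 * p)
  refine squeeze_zero (fun s ↦ binomTail_nonneg _ _ hp0 (by linarith)) (fun s ↦ ?_) hbound
  calc binomTail (2 * s + 1) (s + 1) p
        ≤ 2 ^ (2 * s + 1) * p ^ (s + 1) * (1 - p) ^ (2 * s + 1 - (s + 1)) :=
        binomTail_le _ _ hp0 (by linarith)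
    _ = 2 * p * (4 * (p * (1 - p))) ^ s := by
        rw [show 2 * s + 1 - (s + 1) = s by omega, mul_pow, mul_pow, pow_succ, pow_mul]; ring

lemma antitone_binomTail_odd (hp0 : 0 ≤ p) (hp : p ≤ 1 / 2) :
    Antitone fun s ↦ binomTail (2 * s + 1) (s + 1) p := by
  refine antitone_nat_of_succ_le fun s ↦ ?_
  have : 0 ≤ 1 - p := by linarith
  have : 0 ≤ 1 / 2 - p := by linarith
  rw [← sub_nonneg, binomTail_odd_sub_succ]
  positivity

lemma hasSum_binomTail_odd (hp0 : 0 ≤ p) (hp : p < 1 / 2) (t : ℕ) :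
    HasSum (fun j ↦ (1 / 2 - p) * ((j + t + 1).centralBinom * (p * (1 - p)) ^ (j + t + 1)))
      (binomTail (2 * t + 1) (t + 1) p) := by
  have hsum := hasSum_sub_succ_of_antitone
    ((antitone_binomTail_odd hp0 hp.le).comp_monotone fun _ _ h ↦ Nat.add_le_add_right h t)
    ((tendsto_binomTail_odd_zero hp0 hp).comp (tendsto_add_atTop_nat t))
  simp only [Function.comp_def, sub_zero, zero_add] at hsum
  convert hsum using 2 with j
  rw [← binomTail_odd_sub_succ p (j + t), add_right_comm j 1 t]

end

theorem stmt2 (n : ℕ) (hn : Odd n) (p : ℝ) (hp0 : 0 ≤ p) (hp : p < 1 / 2) :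
    Summable (fun j : ℕ =>
        (((2 * (j + (n + 1) / 2)).choose (j + (n + 1) / 2) : ℕ) : ℝ)
          * (p * (1 - p)) ^ (j + (n + 1) / 2)) ∧
    binomTail n ((n + 1) / 2) p
      = (1 / 2 - p) * ∑' j : ℕ,
          (((2 * (j + (n + 1) / 2)).choose (j + (n + 1) / 2) : ℕ) : ℝ)
            * (p * (1 - p)) ^ (j + (n + 1) / 2) := by
  obtain ⟨t, rfl⟩ := hn
  rw [show (2 * t + 1 + 1) / 2 = t + 1 by omega]
  have hsum := hasSum_binomTail_odd hp0 hp t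
  have hne : (1 / 2 - p : ℝ) ≠ 0 := by linarith
  exact ⟨(summable_mul_left_iff hne).1 hsum.summable, by rw [← hsum.tsum_eq, tsum_mul_left]; rfl⟩
end

section
/- For even m, P[B(p,m) ≥ m/2] − P[B(p,m−1) ≥ (m−1)/2] = (1/2) C(m, m/2) (p(1−p))^{m/2}. -/
/-!
Conditioning on the last trial gives
`P[B(p, n+1) ≥ r+1] = P[B(p, n) ≥ r+1] + p · P[B(p, n) = r]`.
For `m = 2j + 2` and `r = j` the extra term is `C(2j+1, j) (p(1-p))^(j+1)`,
and `C(2j+2, j+1) = 2 C(2j+1, j)` by Pascal's rule and symmetry.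
-/

open Real

open Finset

noncomputable def binomMass (n h : ℕ) (p : ℝ) : ℝ :=
  (n.choose h : ℝ) * p ^ h * (1 - p) ^ (n - h)

lemma binomTail_eq_sum_binomMass (n k : ℕ) (p : ℝ) :
    binomTail n k p = ∑ h ∈ Icc k n, binomMass n h p := rfl

lemma binomMass_of_lt {n h : ℕ} (hnh : n < h) (p : ℝ) : binomMass n h p = 0 := by
  simp [binomMass, Nat.choose_eq_zero_of_lt hnh]

lemma binomMass_succ_succ (n h : ℕ) (p : ℝ) :
    binomMass (n + 1) (h + 1) p = p * binomMass n h p + (1 - p) * binomMass n (h + 1) p := by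
  rcases lt_or_ge n (h + 1) with hnh | hhn
  · rw [binomMass_of_lt hnh]
    simp only [binomMass, Nat.choose_succ_succ', Nat.add_sub_add_right,
      Nat.choose_eq_zero_of_lt hnh, Nat.cast_add, Nat.cast_zero]
    ring
  · simp only [binomMass, Nat.choose_succ_succ', Nat.add_sub_add_right, Nat.cast_add]
    rw [show n - h = n - (h + 1) + 1 by omega]
    ring

lemma binomTail_succ_succ_s4 {n r : ℕ} (hrn : r ≤ n) (p : ℝ) :
    binomTail (n + 1) (r + 1) p = binomTail n (r + 1) p + p * binomMass n r p := by
  have hshift : binomTail (n + 1) (r + 1) p = ∑ h ∈ Icc r n, binomMass (n + 1) (h + 1) p := by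
    rw [binomTail_eq_sum_binomMass, ← map_add_right_Icc, sum_map]
    rfl
  have hbot : ∑ h ∈ Icc r n, binomMass n h p = binomMass n r p + binomTail n (r + 1) p := by
    rw [binomTail_eq_sum_binomMass, Icc_add_one_left_eq_Ioc]
    exact (add_sum_Ioc_eq_sum_Icc hrn).symm
  have htop : ∑ h ∈ Icc r n, binomMass n (h + 1) p = binomTail n (r + 1) p :=
    calc ∑ h ∈ Icc r n, binomMass n (h + 1) p
        = ∑ h ∈ Icc (r + 1) (n + 1), binomMass n h p := by
          rw [← map_add_right_Icc, sum_map]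
          rfl
      _ = binomTail n (r + 1) p := by
          rw [sum_Icc_succ_top (by omega), binomMass_of_lt n.lt_succ_self, add_zero]
          rfl
  rw [hshift]
  simp only [binomMass_succ_succ, sum_add_distrib, ← mul_sum, hbot, htop]
  ring

lemma choose_mid_succ (j : ℕ) : (2 * j + 2).choose (j + 1) = 2 * (2 * j + 1).choose j := by
  rw [Nat.choose_succ_succ', Nat.choose_symm_half]
  ring

theorem stmt4_general (m : ℕ) (hm : Even m) (hm0 : 0 < m) (p : ℝ) :
    binomTail m (m / 2) p - binomTail (m - 1) (m / 2) p
      = (1 / 2) * (m.choose (m / 2) : ℝ) * (p * (1 - p)) ^ (m / 2) := by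
  obtain ⟨j, rfl⟩ : ∃ j, m = 2 * j + 2 := by
    obtain ⟨k, rfl⟩ := hm
    exact ⟨k - 1, by omega⟩
  rw [show (2 * j + 2) / 2 = j + 1 by omega, show 2 * j + 2 - 1 = 2 * j + 1 by omega,
    binomTail_succ_succ_s4 (by omega : j ≤ 2 * j + 1), choose_mid_succ, binomMass,
    show 2 * j + 1 - j = j + 1 by omega]
  push_cast
  rw [mul_pow]
  ring

theorem stmt4 (m : ℕ) (hm : Even m) (hm0 : 0 < m) (p : ℝ) (hp0 : 0 ≤ p) (hp1 : p ≤ 1) :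
    binomTail m (m / 2) p - binomTail (m - 1) (m / 2) p
      = (1 / 2) * (m.choose (m / 2) : ℝ) * (p * (1 - p)) ^ (m / 2) :=
  stmt4_general m hm hm0 p
end

section
/- For all integers j ≥ 1, 4^j · e^{l(2j)} / √(πj) < C(2j, j) < 4^j · e^{u(2j)} / √(πj), where l(n) = −(9n+1)/(3n(12n+1)) and u(n) = −(18n−1)/(12n(6n+1)). -/
open Real

noncomputable def l (x : ℝ) : ℝ := -(9 * x + 1) / (3 * x * (12 * x + 1))

noncomputable def u (x : ℝ) : ℝ := -(18 * x - 1) / (12 * x * (6 * x + 1))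

/-!
Let `c n = C(2n,n) √(πn) / 4ⁿ`. Wallis' product gives `c n → 1`, and the recurrence of the
central binomial coefficients gives `log c (n+1) - log c n = ½ log (1 + 1/(4n(n+1)))`, which
lies between `1/(2(2n+1)²)` and `1/(8n(n+1))`. The first exceeds `u (2n+2) - u (2n)` and the
second is below `l (2n+2) - l (2n)`, so `log c n - u (2n)` increases strictly and
`log c n - l (2n)` decreases strictly; both tend to `0`, whence `l (2n) < log c n < u (2n)`.
-/

open Filter Topology

theorem StrictMono.lt_of_tendsto {α β : Type*} [Preorder α] [TopologicalSpace α]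
    [OrderClosedTopology α] [SemilatticeSup β] [NoMaxOrder β] {f : β → α} {a : α}
    (hf : StrictMono f) (ha : Tendsto f atTop (𝓝 a)) (b : β) : f b < a := by
  obtain ⟨c, hc⟩ := exists_gt b
  exact (hf hc).trans_le (hf.monotone.ge_of_tendsto ha c)

theorem StrictAnti.lt_of_tendsto {α β : Type*} [Preorder α] [TopologicalSpace α]
    [OrderClosedTopology α] [SemilatticeSup β] [NoMaxOrder β] {f : β → α} {a : α}
    (hf : StrictAnti f) (ha : Tendsto f atTop (𝓝 a)) (b : β) : a < f b := by
  obtain ⟨c, hc⟩ := exists_gt b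
  exact (hf.antitone.le_of_tendsto ha c).trans_lt (hf hc)

lemma u_two_mul_add_two_sub_lt {x : ℝ} (hx : 1 ≤ x) :
    u (2 * x + 2) - u (2 * x) < 1 / (2 * (2 * x + 1) ^ 2) := by
  unfold u
  rw [div_sub_div _ _ (by positivity) (by positivity),
    div_lt_div_iff₀ (by positivity) (by positivity)]
  nlinarith [mul_le_mul hx hx zero_le_one (by linarith)]

lemma lt_l_two_mul_add_two_sub {x : ℝ} (hx : 0 < x) :
    1 / (8 * x * (x + 1)) < l (2 * x + 2) - l (2 * x) := by
  unfold l
  rw [div_sub_div _ _ (by positivity) (by positivity),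
    div_lt_div_iff₀ (by positivity) (by positivity)]
  nlinarith [pow_pos hx 2, pow_pos hx 3, pow_pos hx 4, pow_pos hx 5]

lemma tendsto_u_atTop : Tendsto u atTop (𝓝 0) := by
  have hnum : Tendsto (fun x : ℝ ↦ -(18 - x⁻¹)) atTop (𝓝 (-(18 - 0))) :=
    (tendsto_inv_atTop_zero.const_sub 18).neg
  have hden : Tendsto (fun x : ℝ ↦ 12 * (6 * x + 1)) atTop atTop :=
    (tendsto_atTop_add_const_right _ 1 (tendsto_id.const_mul_atTop (by norm_num))).const_mul_atTop
      (by norm_num)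
  refine (hnum.div_atTop hden).congr' ?_
  filter_upwards [eventually_gt_atTop 0] with x hx
  unfold u
  field_simp

lemma tendsto_l_atTop : Tendsto l atTop (𝓝 0) := by
  have hnum : Tendsto (fun x : ℝ ↦ -(9 + x⁻¹)) atTop (𝓝 (-(9 + 0))) :=
    (tendsto_inv_atTop_zero.const_add 9).neg
  have hden : Tendsto (fun x : ℝ ↦ 3 * (12 * x + 1)) atTop atTop :=
    (tendsto_atTop_add_const_right _ 1 (tendsto_id.const_mul_atTop (by norm_num))).const_mul_atTop
      (by norm_num)
  refine (hnum.div_atTop hden).congr' ?_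
  filter_upwards [eventually_gt_atTop 0] with x hx
  unfold l
  field_simp

theorem Real.Wallis.W_eq_centralBinom (n : ℕ) :
    Wallis.W n = 16 ^ n / ((n.centralBinom : ℝ) ^ 2 * (2 * n + 1)) := by
  have h := Nat.add_choose_mul_factorial_mul_factorial n n
  rw [← two_mul, ← Nat.centralBinom_eq_two_mul_choose] at h
  rw [Wallis.W_eq_factorial_ratio, ← h, pow_mul]
  push_cast
  field_simp
  norm_num

noncomputable def normalizedCentralBinom (n : ℕ) : ℝ := n.centralBinom * √(π * n) / 4 ^ n

lemma normalizedCentralBinom_sq (n : ℕ) :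
    normalizedCentralBinom n ^ 2 = π * n * n.centralBinom ^ 2 / 16 ^ n := by
  rw [normalizedCentralBinom, div_pow, mul_pow, sq_sqrt (by positivity), ← pow_mul, mul_comm n 2,
    pow_mul]
  norm_num
  ring

lemma normalizedCentralBinom_pos {n : ℕ} (hn : n ≠ 0) : 0 < normalizedCentralBinom n := by
  have := Nat.centralBinom_pos n
  have := Nat.pos_of_ne_zero hn
  unfold normalizedCentralBinom
  positivity

lemma normalizedCentralBinom_sq_eq_pi_div_W (n : ℕ) :
    normalizedCentralBinom n ^ 2 = π / Wallis.W n * (n / (2 * n + 1)) := by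
  have := Nat.centralBinom_pos n
  rw [normalizedCentralBinom_sq, Wallis.W_eq_centralBinom]
  field_simp

lemma tendsto_normalizedCentralBinom : Tendsto normalizedCentralBinom atTop (𝓝 1) := by
  have hsq :
      Tendsto (fun n ↦ normalizedCentralBinom n ^ 2) atTop (𝓝 (π / (π / 2) * (1 / 2))) := by
    simp_rw [normalizedCentralBinom_sq_eq_pi_div_W]
    exact (tendsto_const_nhds.div Wallis.tendsto_W_nhds_pi_div_two (by positivity)).mul
      Stirling.tendsto_self_div_two_mul_self_add_one
  rw [show π / (π / 2) * (1 / 2) = 1 by field_simp] at hsq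
  have hnonneg (n : ℕ) : 0 ≤ normalizedCentralBinom n := by
    unfold normalizedCentralBinom; positivity
  simpa only [sqrt_sq (hnonneg _), sqrt_one] using hsq.sqrt

lemma normalizedCentralBinom_succ_sq (n : ℕ) :
    normalizedCentralBinom (n + 1) ^ 2 * (4 * n * (n + 1)) =
      normalizedCentralBinom n ^ 2 * (2 * n + 1) ^ 2 := by
  have h : ((n + 1 : ℕ) : ℝ) * (n + 1).centralBinom = 2 * (2 * n + 1) * n.centralBinom := by
    exact_mod_cast Nat.succ_mul_centralBinom_succ n
  push_cast at h
  rw [normalizedCentralBinom_sq, normalizedCentralBinom_sq, pow_succ]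
  push_cast
  linear_combination
    (π * n * ((n + 1) * (n + 1).centralBinom + 2 * (2 * n + 1) * n.centralBinom) / 16 ^ n / 4) * h

lemma log_normalizedCentralBinom_succ_sub {n : ℕ} (hn : n ≠ 0) :
    log (normalizedCentralBinom (n + 1)) - log (normalizedCentralBinom n) =
      log (1 + 1 / (4 * n * (n + 1))) / 2 := by
  have hc := normalizedCentralBinom_pos hn
  have hn' : (0 : ℝ) < n := by positivity
  have hratio : (normalizedCentralBinom (n + 1) / normalizedCentralBinom n) ^ 2 =
      1 + 1 / (4 * n * (n + 1)) := by
    rw [div_pow, div_eq_iff (by positivity)]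
    field_simp
    linear_combination normalizedCentralBinom_succ_sq n
  rw [← hratio, log_pow, log_div (normalizedCentralBinom_pos n.succ_ne_zero).ne' hc.ne']
  push_cast
  ring

lemma le_log_normalizedCentralBinom_succ_sub {n : ℕ} (hn : n ≠ 0) :
    1 / (2 * (2 * n + 1) ^ 2) ≤
      log (normalizedCentralBinom (n + 1)) - log (normalizedCentralBinom n) := by
  have hn' : (0 : ℝ) < n := by positivity
  have hlog := one_sub_inv_le_log_of_pos (x := 1 + 1 / (4 * n * (n + 1))) (by positivity)
  have hinv :
      1 / (2 * (2 * (n : ℝ) + 1) ^ 2) = (1 - (1 + 1 / (4 * (n : ℝ) * (n + 1)))⁻¹) / 2 := by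
    field_simp
    ring
  rw [log_normalizedCentralBinom_succ_sub hn]
  linarith

lemma log_normalizedCentralBinom_succ_sub_le {n : ℕ} (hn : n ≠ 0) :
    log (normalizedCentralBinom (n + 1)) - log (normalizedCentralBinom n) ≤
      1 / (8 * n * (n + 1)) := by
  have hn' : (0 : ℝ) < n := by positivity
  have hlog := log_le_sub_one_of_pos (x := 1 + 1 / (4 * n * (n + 1))) (by positivity)
  have : 1 / (8 * (n : ℝ) * (n + 1)) = 1 / (4 * n * (n + 1)) / 2 := by field_simp; ring
  rw [log_normalizedCentralBinom_succ_sub hn, this]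
  linarith

lemma tendsto_two_mul_natCast_add_one :
    Tendsto (fun n : ℕ ↦ 2 * ((n : ℝ) + 1)) atTop atTop :=
  (tendsto_atTop_add_const_right _ 1 tendsto_natCast_atTop_atTop).const_mul_atTop two_pos

lemma tendsto_log_normalizedCentralBinom_succ :
    Tendsto (fun n : ℕ ↦ log (normalizedCentralBinom (n + 1))) atTop (𝓝 0) := by
  simpa using ((tendsto_add_atTop_iff_nat 1).2 tendsto_normalizedCentralBinom).log one_ne_zero

lemma strictMono_log_normalizedCentralBinom_sub_u :
    StrictMono fun n : ℕ ↦ log (normalizedCentralBinom (n + 1)) - u (2 * ((n : ℝ) + 1)) := by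
  refine strictMono_nat_of_lt_succ fun n ↦ ?_
  have hu := u_two_mul_add_two_sub_lt (x := (n : ℝ) + 1) (by linarith [n.cast_nonneg (α := ℝ)])
  have hlog := le_log_normalizedCentralBinom_succ_sub n.succ_ne_zero
  push_cast at hlog ⊢
  rw [show 2 * ((n : ℝ) + 1 + 1) = 2 * (n + 1) + 2 by ring]
  linarith

lemma strictAnti_log_normalizedCentralBinom_sub_l :
    StrictAnti fun n : ℕ ↦ log (normalizedCentralBinom (n + 1)) - l (2 * ((n : ℝ) + 1)) := by
  refine strictAnti_nat_of_succ_lt fun n ↦ ?_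
  have hl := lt_l_two_mul_add_two_sub (x := (n : ℝ) + 1) (by positivity)
  have hlog := log_normalizedCentralBinom_succ_sub_le n.succ_ne_zero
  push_cast at hlog ⊢
  rw [show 2 * ((n : ℝ) + 1 + 1) = 2 * (n + 1) + 2 by ring]
  linarith

lemma l_lt_log_normalizedCentralBinom_lt_u {n : ℕ} (hn : n ≠ 0) :
    l (2 * n) < log (normalizedCentralBinom n) ∧ log (normalizedCentralBinom n) < u (2 * n) := by
  obtain ⟨m, rfl⟩ := Nat.exists_eq_succ_of_ne_zero hn
  have hlim_u :
      Tendsto (fun k : ℕ ↦ log (normalizedCentralBinom (k + 1)) - u (2 * ((k : ℝ) + 1)))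
        atTop (𝓝 0) := by
    simpa using tendsto_log_normalizedCentralBinom_succ.sub
      (tendsto_u_atTop.comp tendsto_two_mul_natCast_add_one)
  have hlim_l :
      Tendsto (fun k : ℕ ↦ log (normalizedCentralBinom (k + 1)) - l (2 * ((k : ℝ) + 1)))
        atTop (𝓝 0) := by
    simpa using tendsto_log_normalizedCentralBinom_succ.sub
      (tendsto_l_atTop.comp tendsto_two_mul_natCast_add_one)
  have hu := strictMono_log_normalizedCentralBinom_sub_u.lt_of_tendsto hlim_u m
  have hl := strictAnti_log_normalizedCentralBinom_sub_l.lt_of_tendsto hlim_l m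
  push_cast
  constructor <;> linarith

theorem stmt5 (j : ℕ) (hj : 1 ≤ j) :
    4 ^ j * Real.exp (l (2 * j)) / Real.sqrt (π * j) < (((2 * j).choose j : ℕ) : ℝ) ∧
    (((2 * j).choose j : ℕ) : ℝ) < 4 ^ j * Real.exp (u (2 * j)) / Real.sqrt (π * j) := by
  have hj0 : j ≠ 0 := by omega
  have hsqrt : 0 < √(π * j) := by positivity
  have hc := normalizedCentralBinom_pos hj0
  obtain ⟨hl, hu⟩ := l_lt_log_normalizedCentralBinom_lt_u hj0
  rw [lt_log_iff_exp_lt hc] at hl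
  rw [log_lt_iff_lt_exp hc] at hu
  rw [normalizedCentralBinom, Nat.centralBinom_eq_two_mul_choose] at hl hu
  rw [div_lt_iff₀ hsqrt, lt_div_iff₀ hsqrt]
  rw [lt_div_iff₀ (by positivity)] at hl
  rw [div_lt_iff₀ (by positivity)] at hu
  constructor <;> linarith
end

section
/- For positive integers η, k with 2η ≤ k, define ψ_η(k) = Σ_{j=η}^{k−η} 1/√(j(k−j)). Then ψ_η(k) ≤ π. -/
/-!
The map `x ↦ arcsin ((2x - k)/k)` increases by `π` on `[0, k]` and has derivative
`1/√(x(k - x))`. This derivative decreases on `(0, k/2]`, so by the mean value theorem each term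
with `j ≤ k/2` is at most the increment of the arcsine over `[j - 1, j]`; these telescope, and the
terms with `j ≤ k/2` sum to at most `π/2`. The symmetry `j ↦ k - j` gives the same bound for the
terms with `j > k/2`.
-/

open Real Finset

lemma hasDerivAt_arcsin_two_mul_sub_div {k x : ℝ} (hx : 0 < x) (hxk : x < k) :
    HasDerivAt (fun y => arcsin ((2 * y - k) / k)) (1 / √(x * (k - x))) x := by
  have hk : 0 < k := hx.trans hxk
  have hlin : HasDerivAt (fun y : ℝ => (2 * y - k) / k) (2 / k) x := by
    simpa using (((hasDerivAt_id x).const_mul 2).sub_const k).div_const k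
  have hne_neg_one : (2 * x - k) / k ≠ -1 := by
    rw [ne_eq, div_eq_iff hk.ne']; intro h; linarith
  have hne_one : (2 * x - k) / k ≠ 1 := by
    rw [ne_eq, div_eq_iff hk.ne']; intro h; linarith
  have hsqrt : √(1 - ((2 * x - k) / k) ^ 2) = 2 / k * √(x * (k - x)) := by
    rw [show 1 - ((2 * x - k) / k) ^ 2 = (2 / k) ^ 2 * (x * (k - x)) by field_simp; ring,
      sqrt_mul (by positivity), sqrt_sq (by positivity)]
  refine ((hasDerivAt_arcsin hne_neg_one hne_one).comp x hlin).congr_deriv ?_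
  rw [hsqrt]
  field_simp

lemma one_div_sqrt_le_arcsin_sub {k x : ℝ} (hx : 1 ≤ x) (hxk : 2 * x ≤ k) :
    1 / √(x * (k - x)) ≤ arcsin ((2 * x - k) / k) - arcsin ((2 * (x - 1) - k) / k) := by
  obtain ⟨c, ⟨hc₁, hc₂⟩, hc⟩ := exists_hasDerivAt_eq_slope
    (fun y => arcsin ((2 * y - k) / k)) (fun y => 1 / √(y * (k - y))) (sub_one_lt x)
    (by fun_prop)
    (fun y hy => hasDerivAt_arcsin_two_mul_sub_div (by linarith [hy.1]) (by linarith [hy.2]))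
  rw [sub_sub_cancel, div_one] at hc
  rw [← hc]
  have hc_pos : 0 < c * (k - c) := mul_pos (by linarith) (by linarith)
  -- `y ↦ y (k - y)` increases up to `k/2`, and `c < x ≤ k/2`
  have hcx : c * (k - c) ≤ x * (k - x) := by nlinarith
  gcongr

lemma sum_Ioc_one_div_sqrt_le_arcsin {k n : ℕ} (hn : 2 * n ≤ k) :
    ∑ j ∈ Ioc 0 n, 1 / √((j : ℝ) * (k - j)) ≤ arcsin ((2 * n - k) / k) + π / 2 := by
  induction n with
  | zero =>
    rw [Ioc_self, sum_empty]
    linarith [neg_pi_div_two_le_arcsin ((2 * ((0 : ℕ) : ℝ) - k) / k)]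
  | succ n ih =>
    have hstep := one_div_sqrt_le_arcsin_sub (k := k) (x := n + 1) (by linarith)
      (by exact_mod_cast hn)
    rw [sum_Ioc_succ_top n.zero_le]
    push_cast at hstep ⊢
    rw [add_sub_cancel_right] at hstep
    linarith [ih (by omega)]

lemma sum_Ioc_one_div_sqrt_le_pi_div_two {k n : ℕ} (hn : 2 * n ≤ k) :
    ∑ j ∈ Ioc 0 n, 1 / √((j : ℝ) * (k - j)) ≤ π / 2 := by
  have hn' : (2 * n : ℝ) ≤ k := by exact_mod_cast hn
  have hneg : arcsin ((2 * n - k) / k) ≤ 0 :=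
    arcsin_nonpos.2 (div_nonpos_of_nonpos_of_nonneg (by linarith) (Nat.cast_nonneg k))
  linarith [sum_Ioc_one_div_sqrt_le_arcsin hn]

lemma sum_Ioc_one_div_sqrt_reflect (k m : ℕ) :
    ∑ j ∈ Ioc m (k - 1), 1 / √((j : ℝ) * (k - j)) =
      ∑ j ∈ Ioc 0 (k - 1 - m), 1 / √((j : ℝ) * (k - j)) := by
  refine sum_nbij' (k - ·) (k - ·) ?_ ?_ ?_ ?_ fun j hj => ?_
  all_goals try (intro j hj; simp only [mem_Ioc] at hj ⊢; omega)
  simp only [mem_Ioc] at hj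
  rw [Nat.cast_sub (by omega : j ≤ k), sub_sub_cancel, mul_comm]

theorem stmt11_general (η k : ℕ) (hη : 0 < η) :
    ∑ j ∈ Finset.Icc η (k - η), 1 / Real.sqrt ((j : ℝ) * ((k : ℝ) - (j : ℝ))) ≤ π := by
  calc ∑ j ∈ Icc η (k - η), 1 / √((j : ℝ) * (k - j))
      ≤ ∑ j ∈ Ioc 0 (k - 1), 1 / √((j : ℝ) * (k - j)) :=
        sum_le_sum_of_subset_of_nonneg (fun j hj => by simp only [mem_Icc, mem_Ioc] at hj ⊢; omega)
          (fun _ _ _ => by positivity)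
    _ = ∑ j ∈ Ioc 0 (k / 2), 1 / √((j : ℝ) * (k - j)) +
          ∑ j ∈ Ioc 0 (k - 1 - k / 2), 1 / √((j : ℝ) * (k - j)) := by
        rw [← sum_Ioc_one_div_sqrt_reflect, sum_Ioc_consecutive _ (Nat.zero_le _) (by omega)]
    _ ≤ π / 2 + π / 2 :=
        add_le_add (sum_Ioc_one_div_sqrt_le_pi_div_two (by omega))
          (sum_Ioc_one_div_sqrt_le_pi_div_two (by omega))
    _ = π := add_halves π

theorem stmt11 (η k : ℕ) (hη : 0 < η) (hk : 2 * η ≤ k) :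
    ∑ j ∈ Finset.Icc η (k - η), 1 / Real.sqrt ((j : ℝ) * ((k : ℝ) - (j : ℝ))) ≤ π :=
  stmt11_general η k hη
end

section
/- For positive integers η, k with 2η ≤ k, ψ_η(k) ≤ ψ_η(k+1), where ψ_η(k) = Σ_{j=η}^{k−η} 1/√(j(k−j)). -/
/-!
Write `f_k(j) = 1/√(j(k-j))`. Then
`ψ_η(k+1) - ψ_η(k) = f_{k+1}(k+1-η) - ∑_{j=η}^{k-η} (f_k(j) - f_{k+1}(j))`.
Since `f_k(j) - f_{k+1}(j) ≈ -∂ₖ f_k(j) = 1/(2√j (k-j)^{3/2})`, which is the `x`-derivative of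
`√x/(k√(k-x))`, each difference is bounded by an increment `χ(j+1) - χ(j)` of
`χ(x) = √(x-1)/(k√(k+1-x))`. The sum telescopes to at most `χ(k+1-η)`, and this is at most the
new term `f_{k+1}(k+1-η)`.
-/

open Real Finset

lemma sqrt_mul_sqrt_add_one_le {x : ℝ} (hx : 0 ≤ x) : √x * √(x + 1) ≤ x + 1 / 2 := by
  rw [← sqrt_mul hx]
  exact sqrt_le_iff.mpr ⟨by linarith, by nlinarith⟩

lemma one_div_mul_sub_one_div_mul_le {a b c d : ℝ} (ha : 0 < a) (hb : 0 < b) (hc : 0 < c)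
    (h : a * b + c * d ≤ a ^ 2 + c ^ 2) :
    1 / (c * a) - 1 / (c * b) ≤ c / ((c ^ 2 + a ^ 2) * a) - d / ((c ^ 2 + a ^ 2) * b) := by
  rw [div_sub_div _ _ (by positivity) (by positivity),
    div_sub_div _ _ (by positivity) (by positivity), div_le_div_iff₀ (by positivity) (by positivity)]
  -- cleared of denominators, the goal says exactly that this product is nonnegative
  have : 0 ≤ (c ^ 2 + a ^ 2) * (a ^ 2 * b * c) * (a ^ 2 + c ^ 2 - (a * b + c * d)) := by
    have : 0 ≤ a ^ 2 + c ^ 2 - (a * b + c * d) := by linarith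
    positivity
  nlinarith

noncomputable def chi (k x : ℝ) : ℝ := √(x - 1) / (k * √(k + 1 - x))

lemma chi_nonneg {k : ℝ} (hk : 0 ≤ k) (x : ℝ) : 0 ≤ chi k x := by
  unfold chi
  positivity

lemma one_div_sqrt_sub_le_chi_sub {j k : ℝ} (hj : 1 ≤ j) (hjk : j + 1 ≤ k) :
    1 / √(j * (k - j)) - 1 / √(j * (k + 1 - j)) ≤ chi k (j + 1) - chi k j := by
  have ha : 0 < √(k - j) := sqrt_pos.2 (by linarith)
  have hb : 0 < √(k + 1 - j) := sqrt_pos.2 (by linarith)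
  have hc : 0 < √j := sqrt_pos.2 (by linarith)
  have hab : √(k - j) * √(k + 1 - j) ≤ (k - j) + 1 / 2 := by
    simpa only [sub_add_eq_add_sub] using sqrt_mul_sqrt_add_one_le (x := k - j) (by linarith)
  have hcd : √(j - 1) * √j ≤ (j - 1) + 1 / 2 := by
    simpa only [sub_add_cancel] using sqrt_mul_sqrt_add_one_le (x := j - 1) (by linarith)
  have hsq : √j ^ 2 + √(k - j) ^ 2 = k := by
    rw [sq_sqrt (by linarith), sq_sqrt (by linarith)]
    ring
  have key := one_div_mul_sub_one_div_mul_le ha hb hc (d := √(j - 1))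
    (by rw [sq_sqrt (by linarith), sq_sqrt (by linarith)]; linarith)
  rw [hsq] at key
  rw [sqrt_mul (by linarith), sqrt_mul (by linarith)]
  simpa only [chi, add_sub_cancel_right, add_sub_add_right_eq_sub] using key

lemma chi_le_one_div_sqrt {k x : ℝ} (hx : 1 ≤ x) (hxk : x ≤ k) :
    chi k x ≤ 1 / √(x * (k + 1 - x)) := by
  have hs : 0 < √(k + 1 - x) := sqrt_pos.2 (by linarith)
  have hk : √(x - 1) * √x ≤ k := by
    simpa only [sub_add_cancel] using
      (sqrt_mul_sqrt_add_one_le (x := x - 1) (by linarith)).trans (by linarith)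
  have hx0 : 0 < √x := sqrt_pos.2 (by linarith)
  rw [chi, sqrt_mul (by linarith), div_le_div_iff₀ (mul_pos (by linarith) hs) (by positivity),
    one_mul, ← mul_assoc]
  exact mul_le_mul_of_nonneg_right hk hs.le

lemma sum_one_div_sqrt_sub_le {k : ℝ} {m n : ℕ} (hm : 1 ≤ m) (hmn : m ≤ n)
    (hnk : (n : ℝ) + 1 ≤ k) :
    ∑ j ∈ Icc m n, (1 / √(j * (k - j)) - 1 / √(j * (k + 1 - j))) ≤ chi k (n + 1) - chi k m := by
  calc ∑ j ∈ Icc m n, (1 / √(j * (k - j)) - 1 / √(j * (k + 1 - j)))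
      ≤ ∑ j ∈ Icc m n, (chi k (j + 1) - chi k j) := by
        refine sum_le_sum fun j hj => one_div_sqrt_sub_le_chi_sub ?_ ?_
        · exact_mod_cast hm.trans (mem_Icc.1 hj).1
        · have : (j : ℝ) ≤ n := by exact_mod_cast (mem_Icc.1 hj).2
          linarith
    _ = chi k (n + 1) - chi k m := by
        simpa only [Nat.cast_add, Nat.cast_one] using sum_Icc_sub hmn (fun j : ℕ => chi k j)

theorem stmt12 (η k : ℕ) (hη : 0 < η) (hk : 2 * η ≤ k) :
    ∑ j ∈ Finset.Icc η (k - η), 1 / Real.sqrt ((j : ℝ) * ((k : ℝ) - (j : ℝ)))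
      ≤ ∑ j ∈ Finset.Icc η (k + 1 - η), 1 / Real.sqrt ((j : ℝ) * ((k : ℝ) + 1 - (j : ℝ))) := by
  obtain ⟨n, rfl⟩ : ∃ n, k = n + η := ⟨k - η, by omega⟩
  have hηn : η ≤ n := by omega
  rw [show n + η - η = n by omega, show n + η + 1 - η = n + 1 by omega,
    sum_Icc_succ_top (by omega)]
  have hη1 : (1 : ℝ) ≤ η := by exact_mod_cast hη
  have hn1 : (1 : ℝ) ≤ n := by exact_mod_cast hη.trans_le hηn
  have hdiff := sum_one_div_sqrt_sub_le (k := ((n + η : ℕ) : ℝ)) hη hηn (by push_cast; linarith)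
  have hlast := chi_le_one_div_sqrt (k := ((n + η : ℕ) : ℝ)) (x := n + 1) (by linarith)
    (by push_cast; linarith)
  have hfirst := chi_nonneg (k := ((n + η : ℕ) : ℝ)) (by positivity) η
  rw [sum_sub_distrib] at hdiff
  push_cast at hdiff hlast hfirst ⊢
  linarith
end

section
/- For odd n and p ∈ [0, 1/2), P[B(p,n) ≥ n/2] ≤ (2σ)^{n+1}/2, where σ = √(p(1−p)). -/
open Real

/-! Every term of the tail `h ≥ k + 1` of `B(p, 2k+1)` is at most `C(2k+1, h) p^(k+1) q^k`,
since trading a factor `q = 1 - p` for `p ≤ q` only decreases it; the upper half of the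
binomial coefficients of `2k+1` sums to `4^k`. Hence the tail is at most
`4^k p^(k+1) q^k ≤ 4^k p^(k+1) q^k · 2q = (2σ)^(2k+2) / 2`, using `2q ≥ 1`. -/

lemma Nat.sum_Icc_choose_upper_half (k : ℕ) :
    ∑ h ∈ Finset.Icc (k + 1) (2 * k + 1), (2 * k + 1).choose h = 4 ^ k := by
  have hsplit := Finset.sum_range_add_sum_Ico (fun h => (2 * k + 1).choose h)
    (show k + 1 ≤ 2 * k + 1 + 1 by omega)
  rw [Nat.sum_range_choose_halfway, Nat.sum_range_choose, pow_succ, pow_mul,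
    show 2 ^ 2 = 4 by rfl] at hsplit
  rw [← Finset.Ico_add_one_right_eq_Icc]
  omega

lemma pow_mul_pow_sub_le_pow_mul_pow_sub {R : Type*} [CommSemiring R] [PartialOrder R]
    [IsOrderedRing R] {a b : R} (ha : 0 ≤ a) (hab : a ≤ b) {m h n : ℕ} (hmh : m ≤ h)
    (hhn : h ≤ n) : a ^ h * b ^ (n - h) ≤ a ^ m * b ^ (n - m) := by
  have hb : 0 ≤ b := ha.trans hab
  calc a ^ h * b ^ (n - h) = a ^ m * (a ^ (h - m) * b ^ (n - h)) := by
        rw [← mul_assoc, ← pow_add, Nat.add_sub_cancel' hmh]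
    _ ≤ a ^ m * (b ^ (h - m) * b ^ (n - h)) := by gcongr
    _ = a ^ m * b ^ (n - m) := by rw [← pow_add]; congr 2; omega

lemma binomTail_le_of_le_one_sub {p : ℝ} (hp0 : 0 ≤ p) (hp : p ≤ 1 - p) (n m : ℕ) :
    binomTail n m p ≤ (∑ h ∈ Finset.Icc m n, n.choose h : ℝ) * (p ^ m * (1 - p) ^ (n - m)) := by
  rw [binomTail, Finset.sum_mul]
  refine Finset.sum_le_sum fun h hh => ?_
  rw [Finset.mem_Icc] at hh
  rw [mul_assoc]
  exact mul_le_mul_of_nonneg_left (pow_mul_pow_sub_le_pow_mul_pow_sub hp0 hp hh.1 hh.2)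
    (Nat.cast_nonneg _)

theorem stmt13 (n : ℕ) (hn : Odd n) (p : ℝ) (hp0 : 0 ≤ p) (hp : p < 1 / 2) :
    binomTail n ((n + 1) / 2) p ≤ (2 * Real.sqrt (p * (1 - p))) ^ (n + 1) / 2 := by
  obtain ⟨k, rfl⟩ := hn
  have hm : (2 * k + 1 + 1) / 2 = k + 1 := by omega
  have hq : 0 ≤ 1 - p := by linarith
  have hsigma : (2 * Real.sqrt (p * (1 - p))) ^ (2 * k + 1 + 1) / 2
      = 4 ^ k * (p ^ (k + 1) * (1 - p) ^ k) * (2 * (1 - p)) := by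
    rw [show 2 * k + 1 + 1 = 2 * (k + 1) by ring, pow_mul, mul_pow,
      Real.sq_sqrt (mul_nonneg hp0 hq), mul_pow, mul_pow p, pow_succ (1 - p)]
    ring
  rw [hm, hsigma]
  calc binomTail (2 * k + 1) (k + 1) p
      ≤ 4 ^ k * (p ^ (k + 1) * (1 - p) ^ k) := by
        have := binomTail_le_of_le_one_sub hp0 (by linarith) (2 * k + 1) (k + 1)
        rwa [← Nat.cast_sum, Nat.sum_Icc_choose_upper_half, show 2 * k + 1 - (k + 1) = k by omega,
          Nat.cast_pow, Nat.cast_ofNat] at this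
    _ ≤ 4 ^ k * (p ^ (k + 1) * (1 - p) ^ k) * (2 * (1 - p)) :=
        le_mul_of_one_le_right (by positivity) (by linarith)
end

section
/- For even m and p ∈ [0, 1/2), P[B(p,m) ≥ m/2] ≤ (2σ)^m (1/2 + 1/√(2πm)), where σ = √(p(1−p)); in particular P[B(p,m) ≥ m/2] ≤ (2σ)^m (the Chernoff bound). -/
/-!
Pair each outcome `h ≥ n` of `B(p, 2n)` with `h = n + k`: since `p ≤ 1 - p`, its weight
`p ^ (n + k) (1 - p) ^ (n - k)` is at most `(p (1 - p)) ^ n`, so the tail is at most `(p (1 - p)) ^ n`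
times the upper half of the binomial coefficients of `2n`, which is `(4 ^ n + C(2n, n)) / 2`.
The central binomial coefficient is at most `4 ^ n / √(π n)` because the Stirling sequence `s`
decreases to `√π` and `C(2n, n) = 4 ^ n s(2n) / (s(n) ^ 2 √n)`.
-/

open Real

open Finset Nat Stirling

theorem pow_add_mul_pow_sub_le_mul_pow {a b : ℝ} (ha : 0 ≤ a) (hab : a ≤ b) {n k : ℕ}
    (hk : k ≤ n) : a ^ (n + k) * b ^ (n - k) ≤ (a * b) ^ n :=
  have hb : 0 ≤ b := ha.trans hab
  calc a ^ (n + k) * b ^ (n - k) = (a * b) ^ (n - k) * (a ^ 2) ^ k := by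
        rw [← pow_mul, mul_pow, show n + k = (n - k) + 2 * k by omega, pow_add]; ring
    _ ≤ (a * b) ^ (n - k) * (a * b) ^ k := by gcongr; rw [sq]; gcongr
    _ = (a * b) ^ n := by rw [← pow_add, Nat.sub_add_cancel hk]

theorem Nat.two_mul_sum_Icc_choose_two_mul (n : ℕ) :
    2 * ∑ i ∈ Icc n (2 * n), (2 * n).choose i = 4 ^ n + n.centralBinom := by
  have reflect : ∑ i ∈ Icc n (2 * n), (2 * n).choose i = ∑ i ∈ range (n + 1), (2 * n).choose i :=
    sum_nbij' (fun i ↦ 2 * n - i) (fun i ↦ 2 * n - i) (by intro i; simp; omega)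
      (by intro i; simp; omega) (by intro i; simp; omega) (by intro i; simp; omega)
      (fun i hi ↦ (choose_symm (by simp at hi; omega)).symm)
  have split : ∑ i ∈ range n, (2 * n).choose i + ∑ i ∈ Icc n (2 * n), (2 * n).choose i = 4 ^ n := by
    rw [← Ico_add_one_right_eq_Icc, sum_range_add_sum_Ico _ (by omega), sum_range_choose, pow_mul]
    norm_num
  rw [sum_range_succ, ← centralBinom_eq_two_mul_choose] at reflect
  omega

theorem binomTail_two_mul_le {p : ℝ} (hp0 : 0 ≤ p) (hp : p ≤ 1 - p) (n : ℕ) :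
    binomTail (2 * n) n p ≤ (p * (1 - p)) ^ n * (4 ^ n + n.centralBinom) / 2 := by
  have term : ∀ i ∈ Icc n (2 * n), ((2 * n).choose i : ℝ) * p ^ i * (1 - p) ^ (2 * n - i)
      ≤ (p * (1 - p)) ^ n * (2 * n).choose i := by
    intro i hi
    obtain ⟨k, rfl⟩ := Nat.exists_eq_add_of_le (mem_Icc.mp hi).1
    rw [mul_assoc, mul_comm, show 2 * n - (n + k) = n - k by omega]
    gcongr
    exact pow_add_mul_pow_sub_le_mul_pow hp0 hp (by simp at hi; omega)
  calc binomTail (2 * n) n p ≤ ∑ i ∈ Icc n (2 * n), (p * (1 - p)) ^ n * (2 * n).choose i :=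
        sum_le_sum term
    _ = (p * (1 - p)) ^ n * (4 ^ n + n.centralBinom) / 2 := by
        rw [← mul_sum, mul_div_assoc]
        congr 1
        rw [eq_div_iff two_ne_zero, mul_comm]
        exact_mod_cast two_mul_sum_Icc_choose_two_mul n

theorem Nat.centralBinom_mul_factorial_mul_factorial (n : ℕ) :
    n.centralBinom * n ! * n ! = (2 * n)! := by
  have h := choose_mul_factorial_mul_factorial (show n ≤ 2 * n by omega)
  rwa [show 2 * n - n = n by omega, ← centralBinom_eq_two_mul_choose] at h

theorem Stirling.centralBinom_mul_stirlingSeq_sq (n : ℕ) :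
    (n.centralBinom : ℝ) * stirlingSeq n ^ 2 * √n = stirlingSeq (2 * n) * 4 ^ n := by
  rcases eq_or_ne n 0 with rfl | hn
  · simp
  have hfact : ((2 * n)! : ℝ) = n.centralBinom * n ! * n ! := by
    exact_mod_cast (centralBinom_mul_factorial_mul_factorial n).symm
  have hsqrt : √(2 * (2 * n : ℕ) : ℝ) = 2 * √n := by
    rw [show (2 * (2 * n : ℕ) : ℝ) = 2 ^ 2 * n by push_cast; ring, sqrt_mul (by positivity),
      sqrt_sq zero_le_two]
  simp only [stirlingSeq, hfact, hsqrt]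
  field_simp
  rw [sq_sqrt (by positivity : (0 : ℝ) ≤ n), sq_sqrt (by positivity : (0 : ℝ) ≤ 2 * n),
    show (4 : ℝ) ^ n = 2 ^ (2 * n) by rw [pow_mul]; norm_num]
  push_cast
  ring

theorem Nat.centralBinom_mul_sqrt_le_four_pow {n : ℕ} (hn : n ≠ 0) :
    (n.centralBinom : ℝ) * √(π * n) ≤ 4 ^ n := by
  obtain ⟨j, rfl⟩ := exists_eq_succ_of_ne_zero hn
  set s := stirlingSeq (j + 1)
  have hpos : 0 < s := stirlingSeq'_pos j
  have hpi : √π ≤ s := sqrt_pi_le_stirlingSeq hn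
  have hmono : stirlingSeq (2 * (j + 1)) ≤ s := stirlingSeq'_antitone (show j ≤ 2 * j + 1 by omega)
  refine le_of_mul_le_mul_right ?_ hpos
  calc ((j + 1).centralBinom : ℝ) * √(π * (j + 1 : ℕ)) * s
      = (j + 1).centralBinom * s * √(j + 1 : ℕ) * √π := by rw [sqrt_mul pi_pos.le]; ring
    _ ≤ (j + 1).centralBinom * s * √(j + 1 : ℕ) * s := by gcongr
    _ = stirlingSeq (2 * (j + 1)) * 4 ^ (j + 1) := by
        rw [← centralBinom_mul_stirlingSeq_sq]; ring
    _ ≤ 4 ^ (j + 1) * s := by rw [mul_comm]; gcongr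

theorem binomTail_two_mul_le_of_ne_zero {p : ℝ} (hp0 : 0 ≤ p) (hp : p ≤ 1 - p) {n : ℕ}
    (hn : n ≠ 0) : binomTail (2 * n) n p
      ≤ (2 * √(p * (1 - p))) ^ (2 * n) * (1 / 2 + 1 / √(2 * π * (2 * n : ℕ))) := by
  have hS : 0 < √(π * n) := by positivity
  have hC : (n.centralBinom : ℝ) ≤ 4 ^ n / √(π * n) :=
    (le_div_iff₀ hS).2 (centralBinom_mul_sqrt_le_four_pow hn)
  have hσ : (2 * √(p * (1 - p))) ^ (2 * n) = 4 ^ n * (p * (1 - p)) ^ n := by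
    rw [pow_mul, mul_pow, sq_sqrt (mul_nonneg hp0 (by linarith)), mul_pow]; norm_num
  have hsqrt : √(2 * π * (2 * n : ℕ)) = 2 * √(π * n) := by
    rw [show 2 * π * (2 * n : ℕ) = 2 ^ 2 * (π * n) by push_cast; ring, sqrt_mul (by positivity),
      sqrt_sq zero_le_two]
  calc binomTail (2 * n) n p ≤ (p * (1 - p)) ^ n * (4 ^ n + n.centralBinom) / 2 :=
        binomTail_two_mul_le hp0 hp n
    _ ≤ (p * (1 - p)) ^ n * (4 ^ n + 4 ^ n / √(π * n)) / 2 := by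
        have : 0 ≤ p * (1 - p) := mul_nonneg hp0 (by linarith)
        gcongr
    _ = _ := by rw [hσ, hsqrt]; field_simp

theorem stmt15 (m : ℕ) (hm : Even m) (hm0 : 0 < m) (p : ℝ) (hp0 : 0 ≤ p) (hp : p < 1 / 2) :
    binomTail m (m / 2) p
        ≤ (2 * Real.sqrt (p * (1 - p))) ^ m * (1 / 2 + 1 / Real.sqrt (2 * π * m)) ∧
    binomTail m (m / 2) p ≤ (2 * Real.sqrt (p * (1 - p))) ^ m := by
  obtain ⟨n, rfl⟩ := hm
  rw [← two_mul] at hm0 ⊢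
  rw [Nat.mul_div_cancel_left n two_pos]
  have refined := binomTail_two_mul_le_of_ne_zero hp0 (by linarith) (n := n) (by omega)
  have hsqrt : 2 ≤ √(2 * π * (2 * n : ℕ)) := by
    rw [le_sqrt' two_pos]
    have : (1 : ℝ) ≤ n := by exact_mod_cast (show 1 ≤ n by omega)
    push_cast
    nlinarith [pi_gt_three]
  refine ⟨refined, refined.trans (mul_le_of_le_one_right (by positivity) ?_)⟩
  have := one_div_le_one_div_of_le two_pos hsqrt
  linarith
end

section
/- For p ∈ [0, 1/4] and even m, (4p(1−p))^{m/2} ≤ exp(−3m(1/2−p)²/((1+4p)(1−p))) ≤ exp(−m(1−2p)²/2); for p ∈ [1/4, 1/2], (4p(1−p))^{m/2} ≤ exp(−m(1−2p)²/2) ≤ exp(−3m(1/2−p)²/((1+4p)(1−p))). -/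
/-! Each bound is the `m/2`-th power of a bound on the base `4p(1-p) = 1 - (1-2p)²`.
From `1 - x ≤ e^{-x}` one gets the Hoeffding base `e^{-(1-2p)²}`. For the Bernstein base `e^{-c}`
with `c = 6(1/2-p)²/((1+4p)(1-p)) ≤ 3`, one uses `(1 - c/3)³ ≤ e^{-c}`; then `4p(1-p) ≤ (1 - c/3)³`
is a polynomial inequality whose difference factors as `(1-2p)³` times a polynomial positive on
`[0, 1/2]`. The two exponents compare according to the sign of
`(1+4p)(1-p) - 3/2 = (4p-1)(1/2-p)`. -/

open Real

lemma four_mul_mul_one_sub_le_exp_neg_sq (q : ℝ) : 4 * q * (1 - q) ≤ exp (-(1 - 2 * q) ^ 2) :=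
  calc 4 * q * (1 - q) = 1 - (1 - 2 * q) ^ 2 := by ring
    _ ≤ exp (-(1 - 2 * q) ^ 2) := one_sub_le_exp_neg _

lemma four_mul_mul_one_sub_le_one_sub_div_pow_three {q : ℝ} (h0 : 0 ≤ q) (h1 : q ≤ 1 / 2) :
    4 * q * (1 - q) ≤ (1 - 2 * (1 / 2 - q) ^ 2 / ((1 + 4 * q) * (1 - q))) ^ 3 := by
  have hD : 0 < (1 + 4 * q) * (1 - q) := by nlinarith
  have hr : 0 ≤ 1 / 8 + q / 2 + 5 / 2 * q ^ 2 + 21 * q ^ 3 - 56 * q ^ 4 + 32 * q ^ 5 := by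
    nlinarith [mul_nonneg (mul_nonneg h0 h0) (mul_nonneg h0 h0), sq_nonneg q,
      mul_nonneg (mul_nonneg (mul_nonneg h0 h0) (mul_nonneg h0 h0)) (by linarith : 0 ≤ 1 / 2 - q),
      mul_nonneg (mul_nonneg (mul_nonneg h0 h0) h0) (by linarith : 0 ≤ 1 / 2 - q)]
  have hfactor : (1 / 2 + 5 * q - 6 * q ^ 2) ^ 3 - 4 * q * (1 - q) * ((1 + 4 * q) * (1 - q)) ^ 3
      = (1 - 2 * q) ^ 3 * (1 / 8 + q / 2 + 5 / 2 * q ^ 2 + 21 * q ^ 3 - 56 * q ^ 4 + 32 * q ^ 5) := by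
    ring
  have hsub : 1 - 2 * (1 / 2 - q) ^ 2 / ((1 + 4 * q) * (1 - q))
      = (1 / 2 + 5 * q - 6 * q ^ 2) / ((1 + 4 * q) * (1 - q)) := by
    rw [one_sub_div hD.ne']
    ring
  rw [hsub, div_pow, le_div_iff₀ (by positivity)]
  nlinarith [mul_nonneg (pow_nonneg (by linarith : 0 ≤ 1 - 2 * q) 3) hr]

lemma four_mul_mul_one_sub_le_exp_neg_div {q : ℝ} (h0 : 0 ≤ q) (h1 : q ≤ 1 / 2) :
    4 * q * (1 - q) ≤ exp (-(6 * (1 / 2 - q) ^ 2) / ((1 + 4 * q) * (1 - q))) := by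
  have hD : 0 < (1 + 4 * q) * (1 - q) := by nlinarith
  have hc : 6 * (1 / 2 - q) ^ 2 / ((1 + 4 * q) * (1 - q)) ≤ ((3 : ℕ) : ℝ) := by
    rw [div_le_iff₀ hD]
    push_cast
    nlinarith
  calc 4 * q * (1 - q) ≤ (1 - 2 * (1 / 2 - q) ^ 2 / ((1 + 4 * q) * (1 - q))) ^ 3 :=
        four_mul_mul_one_sub_le_one_sub_div_pow_three h0 h1
    _ = (1 - 6 * (1 / 2 - q) ^ 2 / ((1 + 4 * q) * (1 - q)) / ((3 : ℕ) : ℝ)) ^ 3 := by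
        push_cast
        ring
    _ ≤ exp (-(6 * (1 / 2 - q) ^ 2 / ((1 + 4 * q) * (1 - q)))) := one_sub_div_pow_le_exp_neg hc
    _ = exp (-(6 * (1 / 2 - q) ^ 2) / ((1 + 4 * q) * (1 - q))) := by rw [neg_div]

lemma pow_div_two_le_exp_mul_div_two {x b : ℝ} {m : ℕ} (hm : Even m) (hx0 : 0 ≤ x)
    (hx : x ≤ exp b) : x ^ (m / 2) ≤ exp (m * b / 2) := by
  obtain ⟨k, rfl⟩ := hm
  calc x ^ ((k + k) / 2) = x ^ k := by rw [← two_mul, Nat.mul_div_cancel_left k two_pos]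
    _ ≤ exp b ^ k := pow_le_pow_left₀ hx0 hx k
    _ = exp (↑(k + k) * b / 2) := by
        rw [← exp_nat_mul]
        push_cast
        ring_nf

lemma one_add_four_mul_mul_one_sub_sub (p : ℝ) :
    (1 + 4 * p) * (1 - p) - 3 / 2 = (4 * p - 1) * (1 / 2 - p) := by
  ring

lemma exp_neg_div_le_exp_neg_sq_div_two {m p : ℝ} (hm : 0 ≤ m) (h0 : 0 ≤ p) (h1 : p ≤ 1 / 4) :
    exp (-(3 * m * (1 / 2 - p) ^ 2) / ((1 + 4 * p) * (1 - p)))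
      ≤ exp (-(m * (1 - 2 * p) ^ 2) / 2) := by
  have hD : 0 < (1 + 4 * p) * (1 - p) := by nlinarith
  have hsign := one_add_four_mul_mul_one_sub_sub p
  rw [exp_le_exp, div_le_div_iff₀ hD two_pos]
  nlinarith [mul_nonneg (mul_nonneg hm (sq_nonneg (1 / 2 - p)))
    (mul_nonneg (by linarith : 0 ≤ 1 - 4 * p) (by linarith : 0 ≤ 1 / 2 - p))]

lemma exp_neg_sq_div_two_le_exp_neg_div {m p : ℝ} (hm : 0 ≤ m) (h0 : 1 / 4 ≤ p)
    (h1 : p ≤ 1 / 2) :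
    exp (-(m * (1 - 2 * p) ^ 2) / 2)
      ≤ exp (-(3 * m * (1 / 2 - p) ^ 2) / ((1 + 4 * p) * (1 - p))) := by
  have hD : 0 < (1 + 4 * p) * (1 - p) := by nlinarith
  have hsign := one_add_four_mul_mul_one_sub_sub p
  rw [exp_le_exp, div_le_div_iff₀ two_pos hD]
  nlinarith [mul_nonneg (mul_nonneg hm (sq_nonneg (1 / 2 - p)))
    (mul_nonneg (by linarith : 0 ≤ 4 * p - 1) (by linarith : 0 ≤ 1 / 2 - p))]

theorem stmt17_general (m : ℕ) (hm : Even m) (p : ℝ) :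
    (0 ≤ p → p ≤ 1 / 4 →
      (4 * p * (1 - p)) ^ (m / 2)
          ≤ Real.exp (-(3 * m * (1 / 2 - p) ^ 2) / ((1 + 4 * p) * (1 - p))) ∧
      Real.exp (-(3 * m * (1 / 2 - p) ^ 2) / ((1 + 4 * p) * (1 - p)))
          ≤ Real.exp (-(m * (1 - 2 * p) ^ 2) / 2)) ∧
    (1 / 4 ≤ p → p ≤ 1 / 2 →
      (4 * p * (1 - p)) ^ (m / 2) ≤ Real.exp (-(m * (1 - 2 * p) ^ 2) / 2) ∧
      Real.exp (-(m * (1 - 2 * p) ^ 2) / 2)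
          ≤ Real.exp (-(3 * m * (1 / 2 - p) ^ 2) / ((1 + 4 * p) * (1 - p)))) := by
  have hm' : (0 : ℝ) ≤ m := m.cast_nonneg
  have bernstein (h0 : 0 ≤ p) (h1 : p ≤ 1 / 2) :
      (4 * p * (1 - p)) ^ (m / 2) ≤ exp (-(3 * m * (1 / 2 - p) ^ 2) / ((1 + 4 * p) * (1 - p))) :=
    (pow_div_two_le_exp_mul_div_two hm (by nlinarith)
      (four_mul_mul_one_sub_le_exp_neg_div h0 h1)).trans_eq (by congr 1; ring)
  have hoeffding (h0 : 0 ≤ p) (h1 : p ≤ 1 / 2) :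
      (4 * p * (1 - p)) ^ (m / 2) ≤ exp (-(m * (1 - 2 * p) ^ 2) / 2) :=
    (pow_div_two_le_exp_mul_div_two hm (by nlinarith)
      (four_mul_mul_one_sub_le_exp_neg_sq p)).trans_eq (by congr 1; ring)
  exact ⟨fun h0 h1 => ⟨bernstein h0 (by linarith), exp_neg_div_le_exp_neg_sq_div_two hm' h0 h1⟩,
    fun h0 h1 => ⟨hoeffding (by linarith) h1, exp_neg_sq_div_two_le_exp_neg_div hm' h0 h1⟩⟩

theorem stmt17 (m : ℕ) (hm : Even m) (hm0 : 0 < m) (p : ℝ) :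
    (0 ≤ p → p ≤ 1 / 4 →
      (4 * p * (1 - p)) ^ (m / 2)
          ≤ Real.exp (-(3 * m * (1 / 2 - p) ^ 2) / ((1 + 4 * p) * (1 - p))) ∧
      Real.exp (-(3 * m * (1 / 2 - p) ^ 2) / ((1 + 4 * p) * (1 - p)))
          ≤ Real.exp (-(m * (1 - 2 * p) ^ 2) / 2)) ∧
    (1 / 4 ≤ p → p ≤ 1 / 2 →
      (4 * p * (1 - p)) ^ (m / 2) ≤ Real.exp (-(m * (1 - 2 * p) ^ 2) / 2) ∧
      Real.exp (-(m * (1 - 2 * p) ^ 2) / 2)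
          ≤ Real.exp (-(3 * m * (1 / 2 - p) ^ 2) / ((1 + 4 * p) * (1 - p)))) :=
  stmt17_general m hm p
end
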